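/- arXiv:2403.17566 — 5 statements merged into one kernel-verified Lean document; each statement's English description precedes it below -/
import Mathlib

section
/- For self-adjoint operators A₁ and A₂ on a finite-dimensional Hilbert space, |ln tr(e^{-A₁}) − ln tr(e^{-A₂})| ≤ ‖A₁ − A₂‖. -/
open scoped InnerProductSpace

/-- The trace of a continuous linear endomorphism. -/
noncomputable def opTrace {E : Type*} [NormedAddCommGroup E] [InnerProductSpace ℂ E]
    (A : E →L[ℂ] E) : ℂ := LinearMap.trace ℂ E A.toLinearMap

section aux

variable {E : Type*} [NormedAddCommGroup E] [InnerProductSpace ℂ E] [FiniteDimensional ℂ E]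

lemma aux_exp_eigen (A : E →L[ℂ] E) (v : E) (μ : ℂ) (h : A v = μ • v) :
    NormedSpace.exp A v = Complex.exp μ • v := by
  have hpow : ∀ n : ℕ, (A ^ n) v = μ ^ n • v := by
    intro n
    induction n with
    | zero => simp
    | succ n ih =>
      rw [pow_succ, ContinuousLinearMap.mul_apply, h, map_smul, ih, smul_smul, pow_succ,
        mul_comm]
  have hs := NormedSpace.expSeries_summable' (𝕂 := ℂ) A
  have hsμ : Summable fun n : ℕ => (n.factorial : ℂ)⁻¹ * μ ^ n := by
    simpa [smul_eq_mul] using NormedSpace.expSeries_summable' (𝕂 := ℂ) μ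
  have hφ : NormedSpace.exp A v = (ContinuousLinearMap.apply ℂ E v)
      (∑' n : ℕ, (n.factorial : ℂ)⁻¹ • A ^ n) := by
    rw [NormedSpace.exp_eq_tsum ℂ]; rfl
  rw [hφ, ContinuousLinearMap.map_tsum _ hs]
  have : ∀ n : ℕ, (ContinuousLinearMap.apply ℂ E v) ((n.factorial : ℂ)⁻¹ • A ^ n)
      = ((n.factorial : ℂ)⁻¹ * μ ^ n) • v := by
    intro n
    simp [ContinuousLinearMap.apply_apply, hpow, smul_smul]
  rw [tsum_congr this, hsμ.tsum_smul_const, Complex.exp_eq_exp_ℂ, NormedSpace.exp_eq_tsum ℂ]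
  simp [smul_eq_mul]

lemma aux_trace {ι : Type*} [Fintype ι] [DecidableEq ι] (b : OrthonormalBasis ι ℂ E)
    (f : E →L[ℂ] E) : opTrace f = ∑ i, ⟪b i, f (b i)⟫_ℂ := by
  rw [opTrace, LinearMap.trace_eq_matrix_trace ℂ b.toBasis, Matrix.trace]
  congr 1
  ext i
  rw [Matrix.diag_apply, LinearMap.toMatrix_apply, OrthonormalBasis.coe_toBasis,
    OrthonormalBasis.coe_toBasis_repr_apply, OrthonormalBasis.repr_apply_apply]
  rfl

lemma aux_inner_eigen {ι : Type*} [Fintype ι] (c : OrthonormalBasis ι ℂ E) (f : E →L[ℂ] E)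
    (d : ι → ℂ) (hf : ∀ j, f (c j) = d j • c j) (v : E) :
    ⟪v, f v⟫_ℂ = ∑ j, (‖⟪c j, v⟫_ℂ‖ ^ 2 : ℝ) * d j := by
  have hv : f v = ∑ j, ⟪c j, v⟫_ℂ • (d j • c j) := by
    conv_lhs => rw [← c.sum_repr' v]
    rw [map_sum]
    exact Finset.sum_congr rfl fun j _ => by rw [map_smul, hf j]
  rw [hv, inner_sum]
  refine Finset.sum_congr rfl fun j _ => ?_
  rw [inner_smul_right, inner_smul_right, ← inner_conj_symm v (c j)]
  have h1 : ⟪c j, v⟫_ℂ * (starRingEnd ℂ) ⟪c j, v⟫_ℂ = ((‖⟪c j, v⟫_ℂ‖ ^ 2 : ℝ) : ℂ) := by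
    rw [Complex.mul_conj]
    norm_cast
    rw [Complex.normSq_eq_norm_sq]
  calc ⟪c j, v⟫_ℂ * (d j * (starRingEnd ℂ) ⟪c j, v⟫_ℂ)
      = (⟪c j, v⟫_ℂ * (starRingEnd ℂ) ⟪c j, v⟫_ℂ) * d j := by ring
    _ = (‖⟪c j, v⟫_ℂ‖ ^ 2 : ℝ) * d j := by rw [h1]

lemma aux_peierls (A : E →L[ℂ] E) (hA : IsSelfAdjoint A) (v : E) (hv : ‖v‖ = 1) :
    Real.exp (-(⟪v, A v⟫_ℂ).re) ≤ (⟪v, NormedSpace.exp (-A) v⟫_ℂ).re := by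
  have hS : (A : E →ₗ[ℂ] E).IsSymmetric :=
    ContinuousLinearMap.isSelfAdjoint_iff_isSymmetric.mp hA
  have hn : Module.finrank ℂ E = Module.finrank ℂ E := rfl
  set c := hS.eigenvectorBasis hn with hcdef
  set ν := hS.eigenvalues hn with hνdef
  have hc : ∀ j, A (c j) = (ν j : ℂ) • c j := fun j =>
    (hS.hasEigenvector_eigenvectorBasis hn j).apply_eq_smul
  have hexpc : ∀ j, NormedSpace.exp (-A) (c j) = Complex.exp (-(ν j : ℂ)) • c j := fun j =>
    aux_exp_eigen (-A) (c j) (-(ν j : ℂ)) (by simp [hc j])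
  set w : Fin (Module.finrank ℂ E) → ℝ := fun j => ‖⟪c j, v⟫_ℂ‖ ^ 2 with hwdef
  have hw0 : ∀ j, 0 ≤ w j := fun j => sq_nonneg _
  have hsum : ∑ j, w j = 1 := by
    have h1 : ⟪v, (1 : E →L[ℂ] E) v⟫_ℂ = ∑ j, (w j : ℂ) * 1 :=
      aux_inner_eigen c 1 (fun _ => 1) (by simp) v
    have h2 := congrArg Complex.re h1
    simpa [Complex.re_sum, inner_self_eq_norm_sq_to_K, hv] using h2.symm
  have hAv : (⟪v, A v⟫_ℂ).re = ∑ j, w j * ν j := by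
    have h1 : ⟪v, A v⟫_ℂ = ∑ j, (w j : ℂ) * (ν j : ℂ) :=
      aux_inner_eigen c A (fun j => (ν j : ℂ)) hc v
    have h2 := congrArg Complex.re h1
    simpa [Complex.re_sum] using h2
  have hEv : (⟪v, NormedSpace.exp (-A) v⟫_ℂ).re = ∑ j, w j * Real.exp (-ν j) := by
    have hexpc' : ∀ j, NormedSpace.exp (-A) (c j) = ((Real.exp (-ν j) : ℝ) : ℂ) • c j := by
      intro j; rw [hexpc j]; congr 1; rw [Complex.ofReal_exp]; norm_cast
    have h1 : ⟪v, NormedSpace.exp (-A) v⟫_ℂ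
        = ∑ j, (w j : ℂ) * ((Real.exp (-ν j) : ℝ) : ℂ) :=
      aux_inner_eigen c (NormedSpace.exp (-A)) (fun j => ((Real.exp (-ν j) : ℝ) : ℂ)) hexpc' v
    have h2 := congrArg Complex.re h1
    simpa [Complex.re_sum, ← Complex.ofReal_neg, Complex.exp_ofReal_re] using h2
  rw [hAv, hEv]
  have hJ := (convexOn_exp).map_sum_le (t := Finset.univ) (w := w) (p := fun j => -ν j)
    (fun j _ => hw0 j) hsum (fun j _ => Set.mem_univ _)
  simp only [smul_eq_mul] at hJ
  calc Real.exp (-∑ j, w j * ν j) = Real.exp (∑ j, w j * (-ν j)) := by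
        congr 1; rw [← Finset.sum_neg_distrib]; exact Finset.sum_congr rfl fun j _ => by ring
    _ ≤ ∑ j, w j * Real.exp (-ν j) := hJ

lemma aux_key (A₁ A₂ : E →L[ℂ] E) (hA₁ : IsSelfAdjoint A₁) (hA₂ : IsSelfAdjoint A₂) :
    (opTrace (NormedSpace.exp (-A₁))).re ≤
      Real.exp ‖A₁ - A₂‖ * (opTrace (NormedSpace.exp (-A₂))).re := by
  have hS : (A₁ : E →ₗ[ℂ] E).IsSymmetric :=
    ContinuousLinearMap.isSelfAdjoint_iff_isSymmetric.mp hA₁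
  have hn : Module.finrank ℂ E = Module.finrank ℂ E := rfl
  set b := hS.eigenvectorBasis hn with hbdef
  set μ := hS.eigenvalues hn with hμdef
  have hb : ∀ i, A₁ (b i) = (μ i : ℂ) • b i := fun i =>
    (hS.hasEigenvector_eigenvectorBasis hn i).apply_eq_smul
  have hbnorm : ∀ i, ‖b i‖ = 1 := fun i => b.orthonormal.1 i
  have hbinner : ∀ i, ⟪b i, b i⟫_ℂ = 1 := fun i => by
    rw [inner_self_eq_norm_sq_to_K, hbnorm i]; norm_num
  have hexpb : ∀ i, NormedSpace.exp (-A₁) (b i) = Complex.exp (-(μ i : ℂ)) • b i := fun i =>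
    aux_exp_eigen (-A₁) (b i) (-(μ i : ℂ)) (by simp [hb i])
  set cst := ‖A₁ - A₂‖ with hcst
  -- trace of exp (-A₁)
  have htr1 : (opTrace (NormedSpace.exp (-A₁))).re = ∑ i, Real.exp (-μ i) := by
    rw [aux_trace b, Complex.re_sum]
    refine Finset.sum_congr rfl fun i _ => ?_
    rw [hexpb i, inner_smul_right, hbinner i, mul_one]
    have : Complex.exp (-(μ i : ℂ)) = ((Real.exp (-μ i) : ℝ) : ℂ) := by
      rw [Complex.ofReal_exp]; norm_cast
    rw [this, Complex.ofReal_re]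
  -- trace of exp (-A₂) bounded below
  have htr2 : (opTrace (NormedSpace.exp (-A₂))).re = ∑ i, (⟪b i, NormedSpace.exp (-A₂) (b i)⟫_ℂ).re := by
    rw [aux_trace b, Complex.re_sum]
  have hbound : ∀ i, Real.exp (-μ i - cst) ≤ (⟪b i, NormedSpace.exp (-A₂) (b i)⟫_ℂ).re := by
    intro i
    refine le_trans ?_ (aux_peierls A₂ hA₂ (b i) (hbnorm i))
    apply Real.exp_le_exp.mpr
    have h1 : (⟪b i, A₁ (b i)⟫_ℂ).re = μ i := by
      rw [hb i, inner_smul_right, hbinner i, mul_one, Complex.ofReal_re]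
    have h2 : (⟪b i, A₂ (b i)⟫_ℂ).re - (⟪b i, A₁ (b i)⟫_ℂ).re ≤ cst := by
      have h3 : (⟪b i, A₂ (b i)⟫_ℂ).re - (⟪b i, A₁ (b i)⟫_ℂ).re
          = (⟪b i, (A₂ - A₁) (b i)⟫_ℂ).re := by
        rw [ContinuousLinearMap.sub_apply, inner_sub_right, Complex.sub_re]
      rw [h3]
      have h4 : (⟪b i, (A₂ - A₁) (b i)⟫_ℂ).re ≤ ‖⟪b i, (A₂ - A₁) (b i)⟫_ℂ‖ := by
        exact Complex.re_le_norm _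
      refine h4.trans ((norm_inner_le_norm _ _).trans ?_)
      rw [hbnorm i, one_mul, hcst, ← norm_neg (A₁ - A₂), neg_sub]
      calc ‖(A₂ - A₁) (b i)‖ ≤ ‖A₂ - A₁‖ * ‖b i‖ := ContinuousLinearMap.le_opNorm _ _
        _ = ‖A₂ - A₁‖ := by rw [hbnorm i, mul_one]
    linarith [h2, h1]
  calc (opTrace (NormedSpace.exp (-A₁))).re
      = Real.exp cst * (Real.exp (-cst) * ∑ i, Real.exp (-μ i)) := by
        rw [← mul_assoc, ← Real.exp_add, add_neg_cancel, Real.exp_zero, one_mul, htr1]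
    _ ≤ Real.exp cst * (opTrace (NormedSpace.exp (-A₂))).re := by
        refine mul_le_mul_of_nonneg_left ?_ (Real.exp_nonneg _)
        rw [htr2, Finset.mul_sum]
        refine Finset.sum_le_sum fun i _ => ?_
        rw [← Real.exp_add]
        have : -cst + -μ i = -μ i - cst := by ring
        rw [this]
        exact hbound i

lemma aux_pos [Nontrivial E] (A : E →L[ℂ] E) (hA : IsSelfAdjoint A) :
    0 < (opTrace (NormedSpace.exp (-A))).re := by
  have hS : (A : E →ₗ[ℂ] E).IsSymmetric :=
    ContinuousLinearMap.isSelfAdjoint_iff_isSymmetric.mp hA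
  have hn : Module.finrank ℂ E = Module.finrank ℂ E := rfl
  set b := hS.eigenvectorBasis hn
  set μ := hS.eigenvalues hn
  have hb : ∀ i, A (b i) = (μ i : ℂ) • b i := fun i =>
    (hS.hasEigenvector_eigenvectorBasis hn i).apply_eq_smul
  have hbinner : ∀ i, ⟪b i, b i⟫_ℂ = 1 := fun i => by
    rw [inner_self_eq_norm_sq_to_K, b.orthonormal.1 i]; norm_num
  have hexpb : ∀ i, NormedSpace.exp (-A) (b i) = Complex.exp (-(μ i : ℂ)) • b i := fun i =>
    aux_exp_eigen (-A) (b i) (-(μ i : ℂ)) (by simp [hb i])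
  have htr : (opTrace (NormedSpace.exp (-A))).re = ∑ i, Real.exp (-μ i) := by
    rw [aux_trace b, Complex.re_sum]
    refine Finset.sum_congr rfl fun i _ => ?_
    rw [hexpb i, inner_smul_right, hbinner i, mul_one]
    have : Complex.exp (-(μ i : ℂ)) = ((Real.exp (-μ i) : ℝ) : ℂ) := by
      rw [Complex.ofReal_exp]; norm_cast
    rw [this, Complex.ofReal_re]
  rw [htr]
  haveI : Nonempty (Fin (Module.finrank ℂ E)) := Fin.pos_iff_nonempty.mp Module.finrank_pos
  exact Finset.sum_pos (fun i _ => Real.exp_pos _) Finset.univ_nonempty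

end aux

/-- For self-adjoint operators `A₁` and `A₂` on a nonzero
finite-dimensional complex Hilbert space,
`|ln tr(e^{-A₁}) − ln tr(e^{-A₂})| ≤ ‖A₁ − A₂‖`. -/
theorem log_trace_exp_lipschitz {E : Type*} [NormedAddCommGroup E] [InnerProductSpace ℂ E]
    [FiniteDimensional ℂ E] [Nontrivial E]
    (A₁ A₂ : E →L[ℂ] E) (hA₁ : IsSelfAdjoint A₁) (hA₂ : IsSelfAdjoint A₂) :
    |Real.log (opTrace (NormedSpace.exp (-A₁))).re
      - Real.log (opTrace (NormedSpace.exp (-A₂))).re| ≤ ‖A₁ - A₂‖ := by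
  have h₁ := aux_pos A₁ hA₁
  have h₂ := aux_pos A₂ hA₂
  have k12 := aux_key A₁ A₂ hA₁ hA₂
  have k21 := aux_key A₂ A₁ hA₂ hA₁
  rw [norm_sub_rev] at k21
  set T₁ := (opTrace (NormedSpace.exp (-A₁))).re
  set T₂ := (opTrace (NormedSpace.exp (-A₂))).re
  rw [abs_sub_le_iff]
  constructor
  · have := Real.log_le_log h₁ k12
    rw [Real.log_mul (Real.exp_ne_zero _) h₂.ne', Real.log_exp] at this
    linarith
  · have := Real.log_le_log h₂ k21
    rw [Real.log_mul (Real.exp_ne_zero _) h₁.ne', Real.log_exp] at this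
    linarith
end

section
/- If ζ : ℕ → ℝ≥0 satisfies ζ(r) ≤ C(r+1)^{-(n+1)} for some n > 1 and C > 0, then there is a constant C'' such that for all L ≥ 1, min over 1 ≤ d ≤ L of (d²/L + Σ_{k ≥ d} ζ(k)) ≤ C'' L^{-n/(n+2)}. -/
/-!
Take `d = ⌈L^{1/(n+2)}⌉`, which balances the two terms: `d²/L ≤ 4 L^{-n/(n+2)}`. For the tail,
the tangent-line inequality `n (b - a) b^{-(n+1)} ≤ a^{-n} - b^{-n}` of the convex function
`t ↦ t^{-n}` telescopes to `Σ_{k ≥ d} (k+1)^{-(n+1)} ≤ d^{-n}/n`, so the tail of `ζ` is at most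
`(C/n) d^{-n} ≤ (C/n) L^{-n/(n+2)}`.
-/

open Real Finset

theorem mul_sub_mul_rpow_neg_le_rpow_neg_sub {a b n : ℝ} (ha : 0 < a) (hb : 0 < b) (hn : 0 ≤ n) :
    n * (b - a) * b ^ (-(n + 1)) ≤ a ^ (-n) - b ^ (-n) := by
  have hratio : 1 + n * (1 - a / b) ≤ (b / a) ^ n := calc
    1 + n * (1 - a / b) = 1 + n * (1 - (b / a)⁻¹) := by rw [inv_div]
    _ ≤ 1 + n * log (b / a) := by gcongr; exact one_sub_inv_le_log_of_pos (by positivity)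
    _ ≤ exp (log (b / a) * n) := by linarith [add_one_le_exp (log (b / a) * n)]
    _ = (b / a) ^ n := (rpow_def_of_pos (by positivity) n).symm
  have hcleared : (b + n * (b - a)) * a ^ n ≤ b ^ n * b := by
    rwa [div_rpow hb.le ha.le, le_div_iff₀ (by positivity),
      show 1 + n * (1 - a / b) = (b + n * (b - a)) / b by field_simp, div_mul_eq_mul_div,
      div_le_iff₀ hb] at hratio
  rw [rpow_neg ha.le, rpow_neg hb.le, rpow_neg hb.le, rpow_add_one hb.ne']
  field_simp
  linarith

theorem sum_range_rpow_neg_add_one_le {d n : ℝ} (hd : 0 < d) (hn : 0 < n) (N : ℕ) :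
    ∑ k ∈ range N, (d + k + 1) ^ (-(n + 1)) ≤ d ^ (-n) / n := by
  rw [le_div_iff₀ hn, sum_mul]
  set h : ℕ → ℝ := fun k => (d + k) ^ (-n)
  have hstep (k : ℕ) : (d + k + 1) ^ (-(n + 1)) * n ≤ h k - h (k + 1) := by
    have := mul_sub_mul_rpow_neg_le_rpow_neg_sub (a := d + k) (b := d + k + 1) (by positivity)
      (by positivity) hn.le
    simp only [h, Nat.cast_succ, ← add_assoc]
    linarith
  calc ∑ k ∈ range N, (d + k + 1) ^ (-(n + 1)) * n
      ≤ ∑ k ∈ range N, (h k - h (k + 1)) := sum_le_sum fun k _ => hstep k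
    _ = h 0 - h N := sum_range_sub' h N
    _ ≤ h 0 := sub_le_self _ (by positivity)
    _ = d ^ (-n) := by simp [h]

theorem tsum_nat_add_le_of_le_rpow_neg {ζ : ℕ → ℝ} {C n : ℝ} (hC : 0 ≤ C) (hn : 0 < n)
    (hnonneg : ∀ r, 0 ≤ ζ r) (hdecay : ∀ r : ℕ, ζ r ≤ C * ((r : ℝ) + 1) ^ (-(n + 1)))
    {d : ℕ} (hd : 0 < d) : ∑' k, ζ (d + k) ≤ C / n * (d : ℝ) ^ (-n) := by
  refine Real.tsum_le_of_sum_range_le (fun k => hnonneg _) fun N => ?_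
  calc ∑ k ∈ range N, ζ (d + k) ≤ ∑ k ∈ range N, C * ((d : ℝ) + k + 1) ^ (-(n + 1)) :=
        sum_le_sum fun k _ => by simpa using hdecay (d + k)
    _ = C * ∑ k ∈ range N, ((d : ℝ) + k + 1) ^ (-(n + 1)) := (mul_sum ..).symm
    _ ≤ C * ((d : ℝ) ^ (-n) / n) := by
        gcongr; exact sum_range_rpow_neg_add_one_le (by positivity) hn N
    _ = C / n * (d : ℝ) ^ (-n) := by ring

theorem exists_mem_Icc_sq_div_le_and_rpow_neg_le {n : ℝ} (hn : 0 ≤ n) {L : ℕ} (hL : 1 ≤ L) :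
    ∃ d ∈ Set.Icc 1 L, (d : ℝ) ^ 2 / L ≤ 4 * (L : ℝ) ^ (-(n / (n + 2))) ∧
      (d : ℝ) ^ (-n) ≤ (L : ℝ) ^ (-(n / (n + 2))) := by
  set x : ℝ := (L : ℝ) ^ (n + 2)⁻¹
  have hL1 : (1 : ℝ) ≤ L := by exact_mod_cast hL
  have hx : 1 ≤ x := one_le_rpow hL1 (by positivity)
  have hLx : (L : ℝ) = x ^ (n + 2) := (rpow_inv_rpow (by positivity) (by positivity)).symm
  have hT : (L : ℝ) ^ (-(n / (n + 2))) = x ^ (-n) := by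
    rw [← rpow_mul (by positivity)]; congr 1; field_simp
  refine ⟨⌈x⌉₊, ⟨Nat.one_le_ceil_iff.mpr (by positivity), Nat.ceil_le.mpr ?_⟩, ?_, ?_⟩
  · exact rpow_le_self_of_one_le hL1 (inv_le_one_of_one_le₀ (by linarith))
  · rw [hT, hLx]
    calc (⌈x⌉₊ : ℝ) ^ 2 / x ^ (n + 2) ≤ (2 * x) ^ 2 / x ^ (n + 2) := by
          gcongr; exact Nat.ceil_le_two_mul (by linarith)
      _ = 4 * x ^ (-n) := by
          rw [rpow_add (by positivity), rpow_two, rpow_neg (by positivity)]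
          field_simp
          ring
  · rw [hT]
    exact rpow_le_rpow_of_nonpos (by positivity) (Nat.le_ceil x) (by linarith)

/-- If `ζ(r) ≤ C(r+1)^{-(n+1)}` for some `n > 1` and `C > 0`, then there
is `C''` such that for all `L ≥ 1`,
`min_{1 ≤ d ≤ L} (d²/L + Σ_{k ≥ d} ζ(k)) ≤ C'' L^{-n/(n+2)}`. -/
theorem min_bound_polynomial_decay (n C : ℝ) (hn : 1 < n) (hC : 0 < C)
    (ζ : ℕ → ℝ) (hnonneg : ∀ r, 0 ≤ ζ r)
    (hdecay : ∀ r : ℕ, ζ r ≤ C * ((r : ℝ) + 1) ^ (-(n + 1))) :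
    ∃ C'' : ℝ, ∀ L : ℕ, 1 ≤ L →
      sInf ((fun d : ℕ => (d : ℝ) ^ 2 / L + ∑' k : ℕ, ζ (d + k)) '' Set.Icc 1 L) ≤
        C'' * (L : ℝ) ^ (-(n / (n + 2))) := by
  have hn0 : 0 < n := by linarith
  refine ⟨4 + C / n, fun L hL => ?_⟩
  obtain ⟨d, hd, hsq, hpow⟩ := exists_mem_Icc_sq_div_le_and_rpow_neg_le hn0.le hL
  have htail := tsum_nat_add_le_of_le_rpow_neg hC.le hn0 hnonneg hdecay hd.1
  have hbdd := ((Set.finite_Icc 1 L).image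
    fun d : ℕ => (d : ℝ) ^ 2 / L + ∑' k : ℕ, ζ (d + k)).bddBelow
  calc sInf _ ≤ (d : ℝ) ^ 2 / L + ∑' k : ℕ, ζ (d + k) := csInf_le hbdd ⟨d, hd, rfl⟩
    _ ≤ 4 * (L : ℝ) ^ (-(n / (n + 2))) + C / n * (L : ℝ) ^ (-(n / (n + 2))) := by
        gcongr
        exact htail.trans (by gcongr)
    _ = (4 + C / n) * (L : ℝ) ^ (-(n / (n + 2))) := by ring
end

section
/- If ζ : ℕ → ℝ≥0 is non-increasing and n ↦ n² ζ(n) is summable, then the function ξ(r) := 12 Σ_{m ≥ ⌊r/3⌋} (2m + 2 + R) ζ(max(m − ⌊(R−1)/2⌋, 0)) + (2R+1)² ζ(2⌊r/3⌋) is summable over r ∈ ℕ. -/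
open Finset

/-- Composing a nonnegative summable sequence with division by 3 preserves summability. -/
lemma summable_comp_div3 {u : ℕ → ℝ} (hu0 : ∀ n, 0 ≤ u n) (hu : Summable u) :
    Summable fun r : ℕ => u (r / 3) := by
  have key : ∀ N : ℕ, ∑ r ∈ Finset.range (3 * N), u (r / 3) = 3 * ∑ k ∈ Finset.range N, u k := by
    intro N
    induction N with
    | zero => simp
    | succ n ih =>
      have h3 : 3 * (n + 1) = (3 * n + 1 + 1) + 1 := by ring
      rw [h3, Finset.sum_range_succ, Finset.sum_range_succ, Finset.sum_range_succ, ih,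
        Finset.sum_range_succ]
      have e1 : (3 * n) / 3 = n := by omega
      have e2 : (3 * n + 1) / 3 = n := by omega
      have e3 : (3 * n + 1 + 1) / 3 = n := by omega
      rw [e1, e2, e3]; ring
  apply summable_of_sum_range_le (c := 3 * ∑' k, u k) (fun n => hu0 _)
  intro N
  calc ∑ r ∈ Finset.range N, u (r / 3)
      ≤ ∑ r ∈ Finset.range (3 * N), u (r / 3) :=
        Finset.sum_le_sum_of_subset_of_nonneg
          (Finset.range_subset_range.mpr (by omega)) (fun _ _ _ => hu0 _)
    _ = 3 * ∑ k ∈ Finset.range N, u k := key N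
    _ ≤ 3 * ∑' k, u k := by
        have := Summable.sum_le_tsum (Finset.range N) (fun k _ => hu0 k) hu
        linarith

/-- If `ζ : ℕ → ℝ≥0` is non-increasing and `n ↦ n² ζ(n)` is summable,
then `ξ(r) := 12 Σ_{m ≥ ⌊r/3⌋} (2m+2+R) ζ(m − ⌊(R−1)/2⌋) + (2R+1)² ζ(2⌊r/3⌋)` is
summable over `r ∈ ℕ` (the argument of `ζ` is truncated at `0`, which is exactly
natural-number subtraction). -/
theorem xi_summable (R : ℕ) (ζ : ℕ → ℝ) (hnonneg : ∀ n, 0 ≤ ζ n) (hmono : Antitone ζ)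
    (hsum : Summable fun n : ℕ => (n : ℝ) ^ 2 * ζ n) :
    Summable (fun r : ℕ =>
      12 * (∑' m : ℕ, (2 * ((r / 3 : ℕ) + m) + 2 + R : ℝ) * ζ ((r / 3 + m) - (R - 1) / 2))
        + ((2 * R + 1 : ℕ) : ℝ) ^ 2 * ζ (2 * (r / 3))) := by
  set c := (R - 1) / 2 with hc
  set f0 : ℕ → ℝ := fun n => (2 * (n : ℝ) + 2 + R) * ζ (n - c) with hf0
  have hf0nonneg : ∀ n, 0 ≤ f0 n := fun n => by
    apply mul_nonneg _ (hnonneg _); positivity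
  -- ζ is summable
  have hζ : Summable ζ := by
    rw [← summable_nat_add_iff 1]
    refine Summable.of_nonneg_of_le (fun n => hnonneg _) (fun n => ?_)
      ((summable_nat_add_iff 1).mpr hsum)
    have h1 : (1 : ℝ) ≤ ((n + 1 : ℕ) : ℝ) ^ 2 := by
      have : (1 : ℝ) ≤ ((n + 1 : ℕ) : ℝ) := by exact_mod_cast Nat.one_le_iff_ne_zero.mpr (by omega)
      nlinarith
    nlinarith [hnonneg (n + 1)]
  -- ζ (· - c) is summable
  have hζc : Summable fun n : ℕ => ζ (n - c) := by
    rw [← summable_nat_add_iff c]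
    simpa using hζ
  -- n² ζ(n - c) is summable
  have hζc2 : Summable fun n : ℕ => (n : ℝ) ^ 2 * ζ (n - c) := by
    rw [← summable_nat_add_iff c]
    refine Summable.of_nonneg_of_le (fun n => mul_nonneg (by positivity) (hnonneg _)) (fun n => ?_)
      ((hsum.mul_left 2).add (hζ.mul_left (2 * (c : ℝ) ^ 2)))
    have harg : n + c - c = n := by omega
    rw [harg]
    push_cast
    nlinarith [hnonneg n, sq_nonneg ((n : ℝ) - (c : ℝ))]
  -- (n+1) * f0 n is summable
  have hnf0 : Summable fun n : ℕ => ((n : ℝ) + 1) * f0 n := by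
    refine Summable.of_nonneg_of_le
      (fun n => mul_nonneg (by positivity) (hf0nonneg n)) (fun n => ?_)
      ((hζc2.mul_left (2 * (R : ℝ) + 8)).add (hζc.mul_left (2 * (R : ℝ) + 8)))
    simp only [hf0]
    have hz := hnonneg (n - c)
    have hn : (0 : ℝ) ≤ (n : ℝ) := Nat.cast_nonneg n
    have hR : (0 : ℝ) ≤ (R : ℝ) := Nat.cast_nonneg R
    nlinarith [mul_nonneg (mul_nonneg hn hn) hz, mul_nonneg hn hz,
      mul_nonneg (mul_nonneg hR hn) hz, mul_nonneg (mul_nonneg hR (mul_nonneg hn hn)) hz]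
  -- the double-indexed family (k, m) ↦ f0 (k + m) is summable
  have hF : Summable fun p : ℕ × ℕ => f0 (p.1 + p.2) := by
    rw [← Finset.HasAntidiagonal.sigmaAntidiagonalEquivProd.summable_iff]
    have hcomp : ∀ x : Σ n : ℕ, Finset.HasAntidiagonal.antidiagonal n,
        f0 ((x.2 : ℕ × ℕ).1 + (x.2 : ℕ × ℕ).2) = f0 x.1 := by
      rintro ⟨n, ⟨⟨k, l⟩, h⟩⟩
      rw [Finset.HasAntidiagonal.mem_antidiagonal] at h
      simp [h]
    refine (summable_sigma_of_nonneg (fun x => hf0nonneg _)).mpr ⟨fun n => ?_, ?_⟩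
    · exact Summable.of_finite
    · refine Summable.of_nonneg_of_le (fun n => tsum_nonneg fun _ => hf0nonneg _)
        (fun n => ?_) hnf0
      have : (∑' x : (Finset.HasAntidiagonal.antidiagonal n : Finset (ℕ × ℕ)),
          f0 ((x : ℕ × ℕ).1 + (x : ℕ × ℕ).2)) = ((n : ℝ) + 1) * f0 n := by
        rw [tsum_fintype]
        have : ∀ x : (Finset.HasAntidiagonal.antidiagonal n : Finset (ℕ × ℕ)),
            f0 ((x : ℕ × ℕ).1 + (x : ℕ × ℕ).2) = f0 n := by
          rintro ⟨⟨k, l⟩, h⟩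
          rw [Finset.HasAntidiagonal.mem_antidiagonal] at h
          simp [h]
        rw [Finset.sum_congr rfl (fun x _ => this x), Finset.sum_const, Finset.card_univ,
          Fintype.card_coe, Finset.Nat.card_antidiagonal, nsmul_eq_mul]
        push_cast
        ring
      exact le_of_eq this
  -- tail sums are summable
  have hT : Summable fun k : ℕ => ∑' m : ℕ, f0 (k + m) :=
    ((summable_prod_of_nonneg (fun p => hf0nonneg _)).mp hF).2
  have hT0 : ∀ k, 0 ≤ ∑' m : ℕ, f0 (k + m) := fun k => tsum_nonneg fun _ => hf0nonneg _
  have hT3 : Summable fun r : ℕ => ∑' m : ℕ, f0 (r / 3 + m) := summable_comp_div3 hT0 hT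
  -- ζ (2 (r/3)) is summable
  have hζ2 : Summable fun k : ℕ => ζ (2 * k) :=
    Summable.of_nonneg_of_le (fun n => hnonneg _) (fun n => hmono (by omega)) hζ
  have hζ23 : Summable fun r : ℕ => ζ (2 * (r / 3)) :=
    summable_comp_div3 (fun k => hnonneg _) hζ2
  -- assemble
  have := (hT3.mul_left 12).add (hζ23.mul_left (((2 * R + 1 : ℕ) : ℝ) ^ 2))
  refine this.congr fun r => ?_
  congr 1
  congr 1
  refine tsum_congr fun m => ?_
  simp only [hf0]
  push_cast
  ring_nf
end

section
/- Let ρ be a state on a finite-dimensional Hilbert space ℋ = ℋ_X ⊗ ℋ_Y, and suppose there exist states ρ_X on ℋ_X and ρ_Y on ℋ_Y and ε ≥ 0 such that |tr(ρ Q) − tr((ρ_X ⊗ ρ_Y) Q)| ≤ ε ‖Q‖ for all operators Q on ℋ. Then for all A acting on ℋ_X and B acting on ℋ_Y, |tr(ρ (A⊗B)) − tr(ρ(A⊗1)) tr(ρ(1⊗B))| ≤ 3 ε ‖A‖ ‖B‖. -/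
open scoped Matrix.Norms.L2Operator Kronecker ComplexOrder

section Aux
open Matrix

variable {ι κ : Type*} [Fintype ι] [Fintype κ] [DecidableEq ι] [DecidableEq κ]

noncomputable local instance matrixCStarAux {n : Type*} [Fintype n] [DecidableEq n] :
    CStarAlgebra (Matrix n n ℂ) := Matrix.instCStarAlgebra

/-- `A ↦ A ⊗ₖ 1` as a star algebra homomorphism. -/
noncomputable def kronLeftHom (ι κ : Type*) [Fintype ι] [Fintype κ] [DecidableEq ι]
    [DecidableEq κ] : Matrix ι ι ℂ →⋆ₐ[ℂ] Matrix (ι × κ) (ι × κ) ℂ where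
  toFun A := A ⊗ₖ (1 : Matrix κ κ ℂ)
  map_one' := one_kronecker_one
  map_mul' A B := by rw [← mul_kronecker_mul, one_mul]
  map_zero' := zero_kronecker _
  map_add' A B := add_kronecker A B 1
  commutes' r := by
    simp [Algebra.algebraMap_eq_smul_one, smul_kronecker, one_kronecker_one]
  map_star' A := by
    ext ⟨i, k⟩ ⟨j, l⟩
    simp [kronecker_apply, conjTranspose_apply, one_apply]
    rcases eq_or_ne k l with h | h <;> simp [h, eq_comm]

/-- `B ↦ 1 ⊗ₖ B` as a star algebra homomorphism. -/
noncomputable def kronRightHom (ι κ : Type*) [Fintype ι] [Fintype κ] [DecidableEq ι]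
    [DecidableEq κ] : Matrix κ κ ℂ →⋆ₐ[ℂ] Matrix (ι × κ) (ι × κ) ℂ where
  toFun B := (1 : Matrix ι ι ℂ) ⊗ₖ B
  map_one' := one_kronecker_one
  map_mul' A B := by rw [← mul_kronecker_mul, one_mul]
  map_zero' := kronecker_zero _
  map_add' A B := kronecker_add 1 A B
  commutes' r := by
    simp [Algebra.algebraMap_eq_smul_one, kronecker_smul, one_kronecker_one]
  map_star' B := by
    ext ⟨i, k⟩ ⟨j, l⟩
    simp [kronecker_apply, conjTranspose_apply, one_apply]
    rcases eq_or_ne i j with h | h <;> simp [h, eq_comm]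

lemma norm_kron_one_le (A : Matrix ι ι ℂ) : ‖A ⊗ₖ (1 : Matrix κ κ ℂ)‖ ≤ ‖A‖ :=
  NonUnitalStarAlgHom.norm_apply_le (kronLeftHom ι κ) A

lemma norm_one_kron_le (B : Matrix κ κ ℂ) : ‖(1 : Matrix ι ι ℂ) ⊗ₖ B‖ ≤ ‖B‖ :=
  NonUnitalStarAlgHom.norm_apply_le (kronRightHom ι κ) B

lemma norm_kron_le (A : Matrix ι ι ℂ) (B : Matrix κ κ ℂ) : ‖A ⊗ₖ B‖ ≤ ‖A‖ * ‖B‖ := by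
  have h : A ⊗ₖ B = (A ⊗ₖ (1 : Matrix κ κ ℂ)) * ((1 : Matrix ι ι ℂ) ⊗ₖ B) := by
    rw [← mul_kronecker_mul, mul_one, one_mul]
  rw [h]
  exact (norm_mul_le _ _).trans
    (mul_le_mul (norm_kron_one_le A) (norm_one_kron_le B) (norm_nonneg _) (norm_nonneg _))

/-- For a state `ρ`, `|tr(ρ M)| ≤ ‖M‖`. -/
lemma norm_trace_mul_le_of_posSemidef (ρ : Matrix ι ι ℂ) (hρ : ρ.PosSemidef)
    (hρtr : ρ.trace = 1) (M : Matrix ι ι ℂ) : ‖(ρ * M).trace‖ ≤ ‖M‖ := by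
  obtain ⟨B, hB⟩ : ∃ B : Matrix ι ι ℂ, ρ = Bᴴ * B := by
    open MatrixOrder in
    exact CStarAlgebra.nonneg_iff_eq_star_mul_self.mp (Matrix.nonneg_iff_posSemidef.mpr hρ)
  subst hB
  set v : ι → EuclideanSpace ℂ ι := fun i => (WithLp.equiv 2 _).symm (fun k => star (B i k)) with hv
  have key : ∀ i, (B * M * Bᴴ) i i = inner ℂ (v i) ((EuclideanSpace.equiv ι ℂ).symm (M *ᵥ (v i))) := by
    intro i
    rw [EuclideanSpace.inner_eq_star_dotProduct]
    simp only [hv, EuclideanSpace.equiv, WithLp.equiv_symm_apply, WithLp.ofLp_toLp,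
      mul_apply, conjTranspose_apply, dotProduct, mulVec, Pi.star_apply, star_star,
      PiLp.continuousLinearEquiv_symm_apply, Finset.mul_sum, Finset.sum_mul]
    rw [Finset.sum_comm]
    refine Finset.sum_congr rfl fun k _ => Finset.sum_congr rfl fun j _ => by ring
  have hnv : ∀ i, ‖(B * M * Bᴴ) i i‖ ≤ ‖M‖ * ‖v i‖ ^ 2 := by
    intro i
    rw [key i]
    calc ‖inner ℂ (v i) ((EuclideanSpace.equiv ι ℂ).symm (M *ᵥ (v i)))‖
        ≤ ‖v i‖ * ‖(EuclideanSpace.equiv ι ℂ).symm (M *ᵥ (v i))‖ := norm_inner_le_norm _ _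
      _ ≤ ‖v i‖ * (‖M‖ * ‖v i‖) := by
          exact mul_le_mul_of_nonneg_left (M.l2_opNorm_mulVec (v i)) (norm_nonneg _)
      _ = ‖M‖ * ‖v i‖ ^ 2 := by ring
  have hsum : ∑ i, ‖v i‖ ^ 2 = 1 := by
    have h1 : ((Bᴴ * B).trace).re = 1 := by rw [hρtr]; simp
    rw [← h1]
    simp only [trace, Complex.re_sum, diag_apply, mul_apply, conjTranspose_apply, Complex.re_sum]
    rw [Finset.sum_comm]
    congr 1; ext i
    rw [EuclideanSpace.norm_eq]
    rw [Real.sq_sqrt (by positivity)]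
    congr 1; ext k
    simp [hv, mul_comm, ← Complex.normSq_eq_norm_sq, Complex.normSq_apply,
      Complex.normSq_eq_conj_mul_self]
  calc ‖(Bᴴ * B * M).trace‖ = ‖(B * M * Bᴴ).trace‖ := by rw [mul_assoc, trace_mul_comm]
    _ ≤ ∑ i, ‖(B * M * Bᴴ) i i‖ := norm_sum_le _ _
    _ ≤ ∑ i, ‖M‖ * ‖v i‖ ^ 2 := Finset.sum_le_sum fun i _ => hnv i
    _ = ‖M‖ := by rw [← Finset.mul_sum, hsum, mul_one]

end Aux

/-- If a state `ρ` on `ℋ_X ⊗ ℋ_Y` is `ε`-indistinguishable from a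
product state `ρ_X ⊗ ρ_Y` on all observables, then its covariance satisfies
`|tr(ρ (A⊗B)) − tr(ρ(A⊗1)) tr(ρ(1⊗B))| ≤ 3 ε ‖A‖ ‖B‖`. -/
theorem indistinguishability_implies_decay_of_correlations
    {ι κ : Type*} [Fintype ι] [Fintype κ] [DecidableEq ι] [DecidableEq κ]
    [Nonempty ι] [Nonempty κ]
    (ρ : Matrix (ι × κ) (ι × κ) ℂ) (hρ : ρ.PosSemidef) (hρtr : ρ.trace = 1)
    (ρX : Matrix ι ι ℂ) (hρX : ρX.PosSemidef) (hρXtr : ρX.trace = 1)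
    (ρY : Matrix κ κ ℂ) (hρY : ρY.PosSemidef) (hρYtr : ρY.trace = 1)
    (ε : ℝ) (hε : 0 ≤ ε)
    (hind : ∀ Q : Matrix (ι × κ) (ι × κ) ℂ,
      ‖(ρ * Q).trace - ((ρX ⊗ₖ ρY) * Q).trace‖ ≤ ε * ‖Q‖) :
    ∀ (A : Matrix ι ι ℂ) (B : Matrix κ κ ℂ),
      ‖(ρ * (A ⊗ₖ B)).trace -
          (ρ * (A ⊗ₖ (1 : Matrix κ κ ℂ))).trace * (ρ * ((1 : Matrix ι ι ℂ) ⊗ₖ B)).trace‖ ≤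
        3 * ε * ‖A‖ * ‖B‖ := by
  intro A B
  open Matrix in
  have hPA : ((ρX ⊗ₖ ρY) * (A ⊗ₖ B)).trace = (ρX * A).trace * (ρY * B).trace := by
    rw [← Matrix.mul_kronecker_mul, Matrix.trace_kronecker]
  have hPA1 : ((ρX ⊗ₖ ρY) * (A ⊗ₖ (1 : Matrix κ κ ℂ))).trace = (ρX * A).trace := by
    rw [← Matrix.mul_kronecker_mul, Matrix.trace_kronecker, Matrix.mul_one, hρYtr, mul_one]
  have hP1B : ((ρX ⊗ₖ ρY) * ((1 : Matrix ι ι ℂ) ⊗ₖ B)).trace = (ρY * B).trace := by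
    rw [← Matrix.mul_kronecker_mul, Matrix.trace_kronecker, Matrix.mul_one, hρXtr, one_mul]
  set a := (ρ * (A ⊗ₖ B)).trace with ha
  set p := (ρ * (A ⊗ₖ (1 : Matrix κ κ ℂ))).trace with hp
  set q := (ρ * ((1 : Matrix ι ι ℂ) ⊗ₖ B)).trace with hq'
  set x := (ρX * A).trace with hx'
  set y := (ρY * B).trace with hy'
  have h1 : ‖a - x * y‖ ≤ ε * (‖A‖ * ‖B‖) := by
    have := hind (A ⊗ₖ B)
    rw [hPA] at this
    exact this.trans (mul_le_mul_of_nonneg_left (norm_kron_le A B) hε)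
  have h2 : ‖p - x‖ ≤ ε * ‖A‖ := by
    have := hind (A ⊗ₖ (1 : Matrix κ κ ℂ))
    rw [hPA1] at this
    exact this.trans (mul_le_mul_of_nonneg_left (norm_kron_one_le A) hε)
  have h3 : ‖q - y‖ ≤ ε * ‖B‖ := by
    have := hind ((1 : Matrix ι ι ℂ) ⊗ₖ B)
    rw [hP1B] at this
    exact this.trans (mul_le_mul_of_nonneg_left (norm_one_kron_le B) hε)
  have hx : ‖x‖ ≤ ‖A‖ := norm_trace_mul_le_of_posSemidef ρX hρX hρXtr A
  have hq : ‖q‖ ≤ ‖B‖ :=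
    (norm_trace_mul_le_of_posSemidef ρ hρ hρtr ((1 : Matrix ι ι ℂ) ⊗ₖ B)).trans
      (norm_one_kron_le B)
  have key : a - p * q = (a - x * y) + x * (y - q) + (x - p) * q := by ring
  calc ‖a - p * q‖ = ‖(a - x * y) + x * (y - q) + (x - p) * q‖ := by rw [key]
    _ ≤ ‖a - x * y‖ + ‖x * (y - q)‖ + ‖(x - p) * q‖ := norm_add₃_le
    _ = ‖a - x * y‖ + ‖x‖ * ‖y - q‖ + ‖x - p‖ * ‖q‖ := by rw [norm_mul, norm_mul]
    _ ≤ ε * (‖A‖ * ‖B‖) + ‖A‖ * (ε * ‖B‖) + (ε * ‖A‖) * ‖B‖ := by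
        have h3' : ‖y - q‖ ≤ ε * ‖B‖ := by rwa [norm_sub_rev]
        have h2' : ‖x - p‖ ≤ ε * ‖A‖ := by rwa [norm_sub_rev]
        exact add_le_add (add_le_add h1
          (mul_le_mul hx h3' (norm_nonneg _) (norm_nonneg _)))
          (mul_le_mul h2' hq (norm_nonneg _) (by positivity))
    _ = 3 * ε * ‖A‖ * ‖B‖ := by ring
end

section
/- Let x, y ∈ ℤ² with x₁ < y₁ and x₂ ≤ y₂. Then Σ_{m=x₁}^{y₁−1} Σ_{n∈w(m)} n · μ(m,n) = ((y₁−x₁)/2)(x₂+y₂), where for each m, w(m) is the set of n such that the segment from x to y intersects the closed vertical dual edge {m+1/2} × [n−1/2, n+1/2], and μ(m,n) = 1 if the segment meets the open edge {m+1/2} × (n−1/2, n+1/2) and μ(m,n) = 1/2 if it meets only an endpoint. -/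
open scoped Classical

/-- The closed vertical dual edge `{m+1/2} × [n−1/2, n+1/2]` in `ℝ²`. -/
def closedDualEdge (m n : ℤ) : Set (ℝ × ℝ) :=
  {p | p.1 = (m : ℝ) + 1 / 2 ∧ (n : ℝ) - 1 / 2 ≤ p.2 ∧ p.2 ≤ (n : ℝ) + 1 / 2}

/-- The open vertical dual edge `{m+1/2} × (n−1/2, n+1/2)` in `ℝ²`. -/
def openDualEdge (m n : ℤ) : Set (ℝ × ℝ) :=
  {p | p.1 = (m : ℝ) + 1 / 2 ∧ (n : ℝ) - 1 / 2 < p.2 ∧ p.2 < (n : ℝ) + 1 / 2}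

/-- The straight segment in `ℝ²` joining the lattice points `x, y ∈ ℤ²`. -/
def latticeSegment (x y : ℤ × ℤ) : Set (ℝ × ℝ) :=
  segment ℝ ((x.1 : ℝ), (x.2 : ℝ)) ((y.1 : ℝ), (y.2 : ℝ))

/-- The weight of the dual edge `(m,n)` for the segment from `x` to `y`: `1` if the
segment meets the open edge, `1/2` if it meets only an endpoint of the closed edge,
and `0` otherwise. -/
noncomputable def edgeWeight (x y : ℤ × ℤ) (m n : ℤ) : ℝ :=
  if (latticeSegment x y ∩ openDualEdge m n).Nonempty then 1
  else if (latticeSegment x y ∩ closedDualEdge m n).Nonempty then 1 / 2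
  else 0

noncomputable def crossY (x y : ℤ × ℤ) (m : ℤ) : ℝ :=
  (x.2:ℝ) + ((y.2:ℝ) - (x.2:ℝ)) * (((m:ℝ) + 1/2 - (x.1:ℝ)) / ((y.1:ℝ) - (x.1:ℝ)))

lemma theta_mem (x y : ℤ × ℤ) (h1 : x.1 < y.1) (m : ℤ)
    (hm1 : x.1 ≤ m) (hm2 : m ≤ y.1 - 1) :
    0 ≤ ((m:ℝ) + 1/2 - (x.1:ℝ)) / ((y.1:ℝ) - (x.1:ℝ)) ∧
      ((m:ℝ) + 1/2 - (x.1:ℝ)) / ((y.1:ℝ) - (x.1:ℝ)) ≤ 1 := by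
  have hc : (x.1:ℝ) < (y.1:ℝ) := by exact_mod_cast h1
  have hm1' : (x.1:ℝ) ≤ (m:ℝ) := by exact_mod_cast hm1
  have hm2' : (m:ℝ) ≤ (y.1:ℝ) - 1 := by exact_mod_cast hm2
  constructor
  · apply div_nonneg <;> linarith
  · rw [div_le_one (by linarith)]; linarith

lemma cross_mem (x y : ℤ × ℤ) (h1 : x.1 < y.1) (m : ℤ)
    (hm1 : x.1 ≤ m) (hm2 : m ≤ y.1 - 1) :
    (((m:ℝ) + 1/2, crossY x y m)) ∈ latticeSegment x y := by
  have hc : (x.1:ℝ) < (y.1:ℝ) := by exact_mod_cast h1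
  obtain ⟨h0, h1'⟩ := theta_mem x y h1 m hm1 hm2
  set θ : ℝ := ((m:ℝ) + 1/2 - (x.1:ℝ)) / ((y.1:ℝ) - (x.1:ℝ)) with hθ
  rw [latticeSegment, segment_eq_image]
  refine ⟨θ, ⟨h0, h1'⟩, ?_⟩
  have hne : (y.1:ℝ) - (x.1:ℝ) ≠ 0 := by linarith
  have h : θ * ((y.1:ℝ) - (x.1:ℝ)) = (m:ℝ) + 1/2 - (x.1:ℝ) := by
    rw [hθ]; field_simp
  simp only [Prod.ext_iff, Prod.smul_mk, Prod.mk_add_mk, smul_eq_mul, crossY]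
  constructor
  · linear_combination h
  · ring

lemma cross_unique (x y : ℤ × ℤ) (h1 : x.1 < y.1) (m : ℤ)
    (p : ℝ × ℝ)
    (hp : p ∈ latticeSegment x y) (hp1 : p.1 = (m:ℝ) + 1/2) :
    p.2 = crossY x y m := by
  have hc : (x.1:ℝ) < (y.1:ℝ) := by exact_mod_cast h1
  have hne : (y.1:ℝ) - (x.1:ℝ) ≠ 0 := by linarith
  rw [latticeSegment, segment_eq_image] at hp
  obtain ⟨θ, _, hpt⟩ := hp
  have h1' : p.1 = (1 - θ) * (x.1:ℝ) + θ * (y.1:ℝ) := by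
    rw [← hpt]; simp [Prod.smul_mk]
  have h2' : p.2 = (1 - θ) * (x.2:ℝ) + θ * (y.2:ℝ) := by
    rw [← hpt]; simp [Prod.smul_mk]
  have hθval : θ = ((m:ℝ) + 1/2 - (x.1:ℝ)) / ((y.1:ℝ) - (x.1:ℝ)) := by
    rw [eq_div_iff hne]; nlinarith [h1'.symm.trans hp1]
  rw [h2', crossY, hθval]; ring

lemma edgeWeight_eq (x y : ℤ × ℤ) (h1 : x.1 < y.1) (m : ℤ)
    (hm1 : x.1 ≤ m) (hm2 : m ≤ y.1 - 1) (n : ℤ) :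
    edgeWeight x y m n =
      if ((n:ℝ) - 1/2 < crossY x y m ∧ crossY x y m < (n:ℝ) + 1/2) then 1
      else if ((n:ℝ) - 1/2 ≤ crossY x y m ∧ crossY x y m ≤ (n:ℝ) + 1/2) then 1/2
      else 0 := by
  have hopen : (latticeSegment x y ∩ openDualEdge m n).Nonempty ↔
      ((n:ℝ) - 1/2 < crossY x y m ∧ crossY x y m < (n:ℝ) + 1/2) := by
    constructor
    · rintro ⟨p, hps, hp1, hp2, hp3⟩
      have := cross_unique x y h1 m p hps hp1
      exact ⟨this ▸ hp2, this ▸ hp3⟩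
    · rintro ⟨ha, hb⟩
      exact ⟨((m:ℝ) + 1/2, crossY x y m), cross_mem x y h1 m hm1 hm2, rfl, ha, hb⟩
  have hclosed : (latticeSegment x y ∩ closedDualEdge m n).Nonempty ↔
      ((n:ℝ) - 1/2 ≤ crossY x y m ∧ crossY x y m ≤ (n:ℝ) + 1/2) := by
    constructor
    · rintro ⟨p, hps, hp1, hp2, hp3⟩
      have := cross_unique x y h1 m p hps hp1
      exact ⟨this ▸ hp2, this ▸ hp3⟩
    · rintro ⟨ha, hb⟩
      exact ⟨((m:ℝ) + 1/2, crossY x y m), cross_mem x y h1 m hm1 hm2, rfl, ha, hb⟩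
  rw [edgeWeight]
  simp only [hopen, hclosed]

lemma crossY_bounds (x y : ℤ × ℤ) (h1 : x.1 < y.1) (h2 : x.2 ≤ y.2) (m : ℤ)
    (hm1 : x.1 ≤ m) (hm2 : m ≤ y.1 - 1) :
    (x.2:ℝ) ≤ crossY x y m ∧ crossY x y m ≤ (y.2:ℝ) := by
  obtain ⟨h0, h1'⟩ := theta_mem x y h1 m hm1 hm2
  have hd : (0:ℝ) ≤ (y.2:ℝ) - (x.2:ℝ) := by
    have : (x.2:ℝ) ≤ (y.2:ℝ) := by exact_mod_cast h2
    linarith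
  rw [crossY]
  constructor
  · nlinarith
  · nlinarith


lemma sumW (x y : ℤ × ℤ) (h1 : x.1 < y.1) (h2 : x.2 ≤ y.2) (m : ℤ)
    (hm1 : x.1 ≤ m) (hm2 : m ≤ y.1 - 1) :
    ∑ n ∈ Finset.Icc x.2 y.2, edgeWeight x y m n = 1 := by
  obtain ⟨hbY, hYd⟩ := crossY_bounds x y h1 h2 m hm1 hm2
  set Y := crossY x y m with hY
  by_cases hhalf : ∃ k : ℤ, Y = (k:ℝ) - 1/2
  · obtain ⟨k, hk⟩ := hhalf
    have hkb : x.2 ≤ k - 1 := by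
      have h : (x.2:ℝ) < (k:ℝ) := by rw [hk] at hbY; linarith
      have : x.2 < k := by exact_mod_cast h
      omega
    have hkd : k ≤ y.2 := by
      have h : (k:ℝ) < ((y.2 + 1 : ℤ):ℝ) := by rw [hk] at hYd; push_cast; linarith
      have : k < y.2 + 1 := by exact_mod_cast h
      omega
    have key : ∀ n : ℤ, edgeWeight x y m n =
        (if n = k - 1 then (1:ℝ)/2 else 0) + (if n = k then (1:ℝ)/2 else 0) := by
      intro n
      rw [edgeWeight_eq x y h1 m hm1 hm2 n, ← hY, hk]
      by_cases e1 : n = k - 1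
      · rw [e1]
        have c1 : ¬(((k - 1 : ℤ):ℝ) - 1/2 < (k:ℝ) - 1/2 ∧ (k:ℝ) - 1/2 < ((k - 1 : ℤ):ℝ) + 1/2) := by
          push_cast; rintro ⟨-, h⟩; linarith
        have c2 : ((k - 1 : ℤ):ℝ) - 1/2 ≤ (k:ℝ) - 1/2 ∧ (k:ℝ) - 1/2 ≤ ((k - 1 : ℤ):ℝ) + 1/2 := by
          constructor <;> [skip; skip] <;> push_cast <;> linarith
        have c3 : ¬(k - 1 = k) := by omega
        rw [if_neg c1, if_pos c2, if_pos (rfl : k - 1 = k - 1), if_neg c3]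
        norm_num
      · by_cases e2 : n = k
        · rw [e2]
          have c1 : ¬((k:ℝ) - 1/2 < (k:ℝ) - 1/2 ∧ (k:ℝ) - 1/2 < (k:ℝ) + 1/2) := by
            rintro ⟨h, -⟩; linarith
          have c2 : (k:ℝ) - 1/2 ≤ (k:ℝ) - 1/2 ∧ (k:ℝ) - 1/2 ≤ (k:ℝ) + 1/2 :=
            ⟨by linarith, by linarith⟩
          have c4 : ¬(k = k - 1) := by omega
          rw [if_neg c1, if_pos c2, if_neg c4, if_pos (rfl : k = k)]
          norm_num
        · have hcl : ¬((n:ℝ) - 1/2 ≤ (k:ℝ) - 1/2 ∧ (k:ℝ) - 1/2 ≤ (n:ℝ) + 1/2) := by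
            rintro ⟨ha, hb⟩
            have h1' : n ≤ k := by exact_mod_cast (by linarith : (n:ℝ) ≤ (k:ℝ))
            have h2' : k < n + 2 := by
              have : (k:ℝ) < ((n + 2 : ℤ):ℝ) := by push_cast; linarith
              exact_mod_cast this
            omega
          have hop : ¬((n:ℝ) - 1/2 < (k:ℝ) - 1/2 ∧ (k:ℝ) - 1/2 < (n:ℝ) + 1/2) :=
            fun h => hcl ⟨h.1.le, h.2.le⟩
          rw [if_neg hop, if_neg hcl, if_neg e1, if_neg e2]
          norm_num
    rw [Finset.sum_congr rfl (fun n _ => key n), Finset.sum_add_distrib,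
      Finset.sum_ite_eq' (Finset.Icc x.2 y.2) (k - 1) (fun _ => (1:ℝ)/2),
      Finset.sum_ite_eq' (Finset.Icc x.2 y.2) k (fun _ => (1:ℝ)/2),
      if_pos (Finset.mem_Icc.mpr ⟨hkb, by omega⟩),
      if_pos (Finset.mem_Icc.mpr ⟨by omega, hkd⟩)]
    norm_num
  · set n₀ : ℤ := ⌊Y + 1/2⌋ with hn₀
    have hfl : (n₀:ℝ) ≤ Y + 1/2 := Int.floor_le _
    have hlt : (n₀:ℝ) < Y + 1/2 := by
      rcases lt_or_eq_of_le hfl with h | h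
      · exact h
      · exact absurd ⟨n₀, by linarith⟩ hhalf
    have hlt2 : Y + 1/2 < (n₀:ℝ) + 1 := Int.lt_floor_add_one _
    have hb0 : x.2 ≤ n₀ := by
      have h : ((x.2 - 1 : ℤ):ℝ) < (n₀:ℝ) := by push_cast; linarith
      have : x.2 - 1 < n₀ := by exact_mod_cast h
      omega
    have hd0 : n₀ ≤ y.2 := by
      have h : (n₀:ℝ) < ((y.2 + 1 : ℤ):ℝ) := by push_cast; linarith
      have : n₀ < y.2 + 1 := by exact_mod_cast h
      omega
    have key : ∀ n : ℤ, edgeWeight x y m n = (if n = n₀ then (1:ℝ) else 0) := by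
      intro n
      rw [edgeWeight_eq x y h1 m hm1 hm2 n, ← hY]
      by_cases e : n = n₀
      · rw [e]
        have c1 : ((n₀:ℝ) - 1/2 < Y ∧ Y < (n₀:ℝ) + 1/2) := ⟨by linarith, by linarith⟩
        rw [if_pos c1, if_pos (rfl : n₀ = n₀)]
      · have hcl : ¬((n:ℝ) - 1/2 ≤ Y ∧ Y ≤ (n:ℝ) + 1/2) := by
          rintro ⟨ha, hb⟩
          have h1' : n ≤ n₀ := by
            have h : ((n:ℤ):ℝ) < ((n₀ + 1 : ℤ):ℝ) := by push_cast; linarith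
            have : n < n₀ + 1 := by exact_mod_cast h
            omega
          have h2' : n₀ ≤ n := by
            have h : ((n₀ - 1 : ℤ):ℝ) < ((n:ℤ):ℝ) := by push_cast; linarith
            have : n₀ - 1 < n := by exact_mod_cast h
            omega
          exact e (le_antisymm h1' h2')
        have hop : ¬((n:ℝ) - 1/2 < Y ∧ Y < (n:ℝ) + 1/2) :=
          fun h => hcl ⟨h.1.le, h.2.le⟩
        rw [if_neg hop, if_neg hcl, if_neg e]
    rw [Finset.sum_congr rfl (fun n _ => key n),
      Finset.sum_ite_eq' (Finset.Icc x.2 y.2) n₀ (fun _ => (1:ℝ)),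
      if_pos (Finset.mem_Icc.mpr ⟨hb0, hd0⟩)]

lemma crossY_reflect (x y : ℤ × ℤ) (h1 : x.1 < y.1) (m : ℤ) :
    crossY x y (x.1 + y.1 - 1 - m) = (x.2:ℝ) + (y.2:ℝ) - crossY x y m := by
  have hc : (x.1:ℝ) < (y.1:ℝ) := by exact_mod_cast h1
  have hne : (y.1:ℝ) - (x.1:ℝ) ≠ 0 := by linarith
  rw [crossY, crossY]
  push_cast
  field_simp
  ring

lemma edgeWeight_reflect (x y : ℤ × ℤ) (h1 : x.1 < y.1) (m : ℤ)
    (hm1 : x.1 ≤ m) (hm2 : m ≤ y.1 - 1) (n : ℤ) :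
    edgeWeight x y (x.1 + y.1 - 1 - m) (x.2 + y.2 - n) = edgeWeight x y m n := by
  rw [edgeWeight_eq x y h1 _ (by omega) (by omega), edgeWeight_eq x y h1 m hm1 hm2,
    crossY_reflect x y h1 m]
  set Y := crossY x y m
  have c1 : (((x.2 + y.2 - n : ℤ)):ℝ) - 1/2 < (x.2:ℝ) + (y.2:ℝ) - Y ∧
      (x.2:ℝ) + (y.2:ℝ) - Y < ((x.2 + y.2 - n : ℤ):ℝ) + 1/2 ↔
      ((n:ℝ) - 1/2 < Y ∧ Y < (n:ℝ) + 1/2) := by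
    push_cast; constructor <;> rintro ⟨u, v⟩ <;> exact ⟨by linarith, by linarith⟩
  have c2 : (((x.2 + y.2 - n : ℤ)):ℝ) - 1/2 ≤ (x.2:ℝ) + (y.2:ℝ) - Y ∧
      (x.2:ℝ) + (y.2:ℝ) - Y ≤ ((x.2 + y.2 - n : ℤ):ℝ) + 1/2 ↔
      ((n:ℝ) - 1/2 ≤ Y ∧ Y ≤ (n:ℝ) + 1/2) := by
    push_cast; constructor <;> rintro ⟨u, v⟩ <;> exact ⟨by linarith, by linarith⟩
  rw [if_congr c1 rfl (if_congr c2 rfl rfl)]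

/-- For lattice points `x, y ∈ ℤ²` with `x₁ < y₁` and `x₂ ≤ y₂`,
`Σ_{m=x₁}^{y₁−1} Σ_n n · μ(m,n) = ((y₁−x₁)/2)(x₂+y₂)`, where `μ(m,n)` is the weight
with which the segment from `x` to `y` crosses the vertical dual edge
`{m+1/2} × [n−1/2, n+1/2]` (all crossed edges have `x₂ ≤ n ≤ y₂`). -/
theorem dual_edge_weight_sum (x y : ℤ × ℤ) (h1 : x.1 < y.1) (h2 : x.2 ≤ y.2) :
    ∑ m ∈ Finset.Icc x.1 (y.1 - 1), ∑ n ∈ Finset.Icc x.2 y.2,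
        (n : ℝ) * edgeWeight x y m n =
      (((y.1 : ℝ) - (x.1 : ℝ)) / 2) * ((x.2 : ℝ) + (y.2 : ℝ)) := by
  set f : ℤ → ℝ := fun m => ∑ n ∈ Finset.Icc x.2 y.2, (n : ℝ) * edgeWeight x y m n with hf
  have pair : ∀ m ∈ Finset.Icc x.1 (y.1 - 1),
      f m + f (x.1 + y.1 - 1 - m) = (x.2:ℝ) + (y.2:ℝ) := by
    intro m hm
    rw [Finset.mem_Icc] at hm
    have hrefl : f (x.1 + y.1 - 1 - m) =
        ∑ n ∈ Finset.Icc x.2 y.2, ((x.2:ℝ) + (y.2:ℝ) - (n:ℝ)) * edgeWeight x y m n := by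
      rw [hf]
      refine Finset.sum_nbij' (i := fun n => x.2 + y.2 - n) (j := fun n => x.2 + y.2 - n)
        ?_ ?_ ?_ ?_ ?_
      · intro a ha; rw [Finset.mem_Icc] at *; omega
      · intro a ha; rw [Finset.mem_Icc] at *; omega
      · intro a _; omega
      · intro a _; omega
      · intro a _
        have hw := edgeWeight_reflect x y h1 m hm.1 hm.2 (x.2 + y.2 - a)
        have he : x.2 + y.2 - (x.2 + y.2 - a) = a := by omega
        rw [he] at hw
        rw [hw]
        push_cast
        ring
    rw [hrefl, hf]
    rw [← Finset.sum_add_distrib]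
    have : ∀ n ∈ Finset.Icc x.2 y.2,
        (n:ℝ) * edgeWeight x y m n + ((x.2:ℝ) + (y.2:ℝ) - (n:ℝ)) * edgeWeight x y m n
          = ((x.2:ℝ) + (y.2:ℝ)) * edgeWeight x y m n := by
      intro n _; ring
    rw [Finset.sum_congr rfl this, ← Finset.mul_sum, sumW x y h1 h2 m hm.1 hm.2, mul_one]
  -- reflect the outer sum
  have houter : ∑ m ∈ Finset.Icc x.1 (y.1 - 1), f m =
      ∑ m ∈ Finset.Icc x.1 (y.1 - 1), f (x.1 + y.1 - 1 - m) := by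
    refine Finset.sum_nbij' (i := fun m => x.1 + y.1 - 1 - m) (j := fun m => x.1 + y.1 - 1 - m)
      ?_ ?_ ?_ ?_ ?_
    · intro a ha; rw [Finset.mem_Icc] at *; omega
    · intro a ha; rw [Finset.mem_Icc] at *; omega
    · intro a _; omega
    · intro a _; omega
    · intro a ha
      congr 1
      omega
  have hcard : ((Finset.Icc x.1 (y.1 - 1)).card : ℝ) = (y.1:ℝ) - (x.1:ℝ) := by
    rw [Int.card_Icc]
    have h : (((y.1 - 1 + 1 - x.1).toNat : ℤ)) = y.1 - x.1 := by omega
    exact_mod_cast congrArg (Int.cast : ℤ → ℝ) h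
  have h2S : 2 * ∑ m ∈ Finset.Icc x.1 (y.1 - 1), f m
      = ((y.1:ℝ) - (x.1:ℝ)) * ((x.2:ℝ) + (y.2:ℝ)) := by
    calc 2 * ∑ m ∈ Finset.Icc x.1 (y.1 - 1), f m
        = ∑ m ∈ Finset.Icc x.1 (y.1 - 1), f m
          + ∑ m ∈ Finset.Icc x.1 (y.1 - 1), f (x.1 + y.1 - 1 - m) := by
          rw [← houter]; ring
      _ = ∑ m ∈ Finset.Icc x.1 (y.1 - 1), (f m + f (x.1 + y.1 - 1 - m)) := by
          rw [Finset.sum_add_distrib]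
      _ = ∑ m ∈ Finset.Icc x.1 (y.1 - 1), ((x.2:ℝ) + (y.2:ℝ)) := Finset.sum_congr rfl pair
      _ = ((Finset.Icc x.1 (y.1 - 1)).card : ℝ) * ((x.2:ℝ) + (y.2:ℝ)) := by
          rw [Finset.sum_const, nsmul_eq_mul]
      _ = ((y.1:ℝ) - (x.1:ℝ)) * ((x.2:ℝ) + (y.2:ℝ)) := by rw [hcard]
  have := h2S
  linarith
end
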